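/- arXiv:2003.10626 — 6 statements merged into one kernel-verified Lean document; each statement's English description precedes it below -/
import Mathlib

section
/- Let δ ∈ ℝ with cos δ ≥ sin δ > 0, let |ψ_{A-BC}⟩ = |0⟩ ⊗ (cos δ |00⟩ + sin δ |11⟩) and ρ_ABC = |ψ_{A-BC}⟩⟨ψ_{A-BC}|. Then the maximal CHSH violations of the two-qubit reductions satisfy ⟨CHSH⟩²_{ρ_AB} = 4(cos²δ − sin²δ)², ⟨CHSH⟩²_{ρ_AC} = 4(cos²δ − sin²δ)², and ⟨CHSH⟩²_{ρ_BC} = 16 cos²δ sin²δ + 4. -/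
open Matrix Finset

noncomputable section

/-- The three Pauli matrices σ₁, σ₂, σ₃. -/
def pauli : Fin 3 → Matrix (Fin 2) (Fin 2) ℂ :=
  ![!![0, 1; 1, 0], !![0, -Complex.I; Complex.I, 0], !![1, 0; 0, -1]]

/-- Kronecker (tensor) product of two one-qubit matrices. -/
def kron2 (A B : Matrix (Fin 2) (Fin 2) ℂ) :
    Matrix (Fin 2 × Fin 2) (Fin 2 × Fin 2) ℂ :=
  fun p q => A p.1 q.1 * B p.2 q.2

/-- Correlation matrix M(ρ) of a two-qubit density matrix: M ij = tr (ρ (σᵢ ⊗ σⱼ)). -/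
def corr (ρ : Matrix (Fin 2 × Fin 2) (Fin 2 × Fin 2) ℂ) :
    Matrix (Fin 3) (Fin 3) ℝ :=
  fun i j => ((ρ * kron2 (pauli i) (pauli j)).trace).re

lemma corr_herm (ρ : Matrix (Fin 2 × Fin 2) (Fin 2 × Fin 2) ℂ) :
    ((corr ρ)ᵀ * corr ρ).IsHermitian := by
  simpa [Matrix.conjTranspose_eq_transpose_of_trivial] using
    Matrix.isHermitian_conjTranspose_mul_self (corr ρ)

/-- Maximal CHSH violation squared:  ⟨CHSH⟩²_ρ = 4(τ₁+τ₂) where τ₁ ≥ τ₂ ≥ τ₃ are the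
eigenvalues of M(ρ)ᵀM(ρ); equivalently 4(tr(MᵀM) − τ₃) where τ₃ is the smallest one. -/
def CHSHsq (ρ : Matrix (Fin 2 × Fin 2) (Fin 2 × Fin 2) ℂ) : ℝ :=
  4 * (((corr ρ)ᵀ * corr ρ).trace -
        Finset.univ.inf' Finset.univ_nonempty (corr_herm ρ).eigenvalues)

/-- Partial trace over the third qubit: ρ_AB. -/
def ptrC (ρ : Matrix (Fin 2 × Fin 2 × Fin 2) (Fin 2 × Fin 2 × Fin 2) ℂ) :
    Matrix (Fin 2 × Fin 2) (Fin 2 × Fin 2) ℂ :=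
  fun p q => ∑ m : Fin 2, ρ (p.1, p.2, m) (q.1, q.2, m)

/-- Partial trace over the second qubit: ρ_AC. -/
def ptrB (ρ : Matrix (Fin 2 × Fin 2 × Fin 2) (Fin 2 × Fin 2 × Fin 2) ℂ) :
    Matrix (Fin 2 × Fin 2) (Fin 2 × Fin 2) ℂ :=
  fun p q => ∑ m : Fin 2, ρ (p.1, m, p.2) (q.1, m, q.2)

/-- Partial trace over the first qubit: ρ_BC. -/
def ptrA (ρ : Matrix (Fin 2 × Fin 2 × Fin 2) (Fin 2 × Fin 2 × Fin 2) ℂ) :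
    Matrix (Fin 2 × Fin 2) (Fin 2 × Fin 2) ℂ :=
  fun p q => ∑ m : Fin 2, ρ (m, p.1, p.2) (m, q.1, q.2)

/-- Density matrix |ψ⟩⟨ψ| of a 3-qubit pure state. -/
def pureState3 (ψ : Fin 2 × Fin 2 × Fin 2 → ℂ) :
    Matrix (Fin 2 × Fin 2 × Fin 2) (Fin 2 × Fin 2 × Fin 2) ℂ :=
  fun p q => ψ p * (starRingEnd ℂ) (ψ q)

/-- The one-qubit basis vector |0⟩. -/
def ket0 : Fin 2 → ℂ := ![1, 0]

/-- The one-qubit basis vector |1⟩. -/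
def ket1 : Fin 2 → ℂ := ![0, 1]

end

/-! For the state `|0⟩ ⊗ (a|00⟩ + b|11⟩)` with real amplitudes, all three two-qubit reductions have
diagonal correlation matrices: `diag(0, 0, a² - b²)` for `ρ_AB` and `ρ_AC`, and
`diag(2ab, -2ab, a² + b²)` for `ρ_BC`. Then `MᵀM` is diagonal with the squared entries as
eigenvalues, and `τ₁ + τ₂` is their sum minus the smallest one. Substituting `a = cos δ`,
`b = sin δ` and `cos² δ + sin² δ = 1` gives the three values. -/

namespace Matrix.IsHermitian

variable {n : Type*} [Fintype n] [DecidableEq n] [Nonempty n]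

theorem inf'_eigenvalues_of_eq_diagonal {A : Matrix n n ℝ} (hA : A.IsHermitian) {d : n → ℝ}
    (h : A = diagonal d) :
    univ.inf' univ_nonempty hA.eigenvalues = univ.inf' univ_nonempty d := by
  have hrange : Set.range hA.eigenvalues = Set.range d := by
    rw [← hA.spectrum_real_eq_range_eigenvalues, h, spectrum_diagonal]
  simp only [inf'_eq_csInf_image, coe_univ, Set.image_univ, hrange]

end Matrix.IsHermitian

theorem CHSHsq_of_corr_eq_diagonal {ρ : Matrix (Fin 2 × Fin 2) (Fin 2 × Fin 2) ℂ} {c : Fin 3 → ℝ}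
    (h : corr ρ = diagonal c) {k : Fin 3} (hk : ∀ i, c k ^ 2 ≤ c i ^ 2) :
    CHSHsq ρ = 4 * (∑ i, c i ^ 2 - c k ^ 2) := by
  have hsq : (corr ρ)ᵀ * corr ρ = diagonal fun i => c i ^ 2 := by
    rw [h, diagonal_transpose, diagonal_mul_diagonal]
    simp only [sq]
  have hmin : univ.inf' univ_nonempty (fun i => c i ^ 2) = c k ^ 2 :=
    le_antisymm (inf'_le _ (mem_univ k)) (le_inf' _ _ fun i _ => hk i)
  rw [CHSHsq, (corr_herm ρ).inf'_eigenvalues_of_eq_diagonal hsq, hsq, trace_diagonal, hmin]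

def ket0TensorSchmidt (a b : ℝ) : Fin 2 × Fin 2 × Fin 2 → ℂ :=
  fun p => ket0 p.1 * ((a : ℂ) * (ket0 p.2.1 * ket0 p.2.2) + (b : ℂ) * (ket1 p.2.1 * ket1 p.2.2))

section ket0TensorSchmidt

variable (a b : ℝ)

theorem corr_ptrC_ket0TensorSchmidt :
    corr (ptrC (pureState3 (ket0TensorSchmidt a b))) = diagonal ![0, 0, a ^ 2 - b ^ 2] := by
  ext i j
  fin_cases i <;> fin_cases j <;>
    simp [corr, kron2, pauli, ptrC, pureState3, ket0TensorSchmidt, ket0, ket1, trace, mul_apply,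
      Fintype.sum_prod_type, Fin.sum_univ_two]
  all_goals ring

theorem corr_ptrB_ket0TensorSchmidt :
    corr (ptrB (pureState3 (ket0TensorSchmidt a b))) = diagonal ![0, 0, a ^ 2 - b ^ 2] := by
  ext i j
  fin_cases i <;> fin_cases j <;>
    simp [corr, kron2, pauli, ptrB, pureState3, ket0TensorSchmidt, ket0, ket1, trace, mul_apply,
      Fintype.sum_prod_type, Fin.sum_univ_two]
  all_goals ring

theorem corr_ptrA_ket0TensorSchmidt :
    corr (ptrA (pureState3 (ket0TensorSchmidt a b))) =
      diagonal ![2 * a * b, -(2 * a * b), a ^ 2 + b ^ 2] := by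
  ext i j
  fin_cases i <;> fin_cases j <;>
    simp [corr, kron2, pauli, ptrA, pureState3, ket0TensorSchmidt, ket0, ket1, trace, mul_apply,
      Fintype.sum_prod_type, Fin.sum_univ_two]
  all_goals ring

theorem CHSHsq_of_corr_eq_diagonal_zero_zero {ρ : Matrix (Fin 2 × Fin 2) (Fin 2 × Fin 2) ℂ}
    {z : ℝ} (h : corr ρ = diagonal ![0, 0, z]) : CHSHsq ρ = 4 * z ^ 2 := by
  rw [CHSHsq_of_corr_eq_diagonal h (k := 0) fun i => by fin_cases i <;> simp [sq_nonneg]]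
  simp [Fin.sum_univ_three]

theorem CHSHsq_ptrC_ket0TensorSchmidt :
    CHSHsq (ptrC (pureState3 (ket0TensorSchmidt a b))) = 4 * (a ^ 2 - b ^ 2) ^ 2 :=
  CHSHsq_of_corr_eq_diagonal_zero_zero (corr_ptrC_ket0TensorSchmidt a b)

theorem CHSHsq_ptrB_ket0TensorSchmidt :
    CHSHsq (ptrB (pureState3 (ket0TensorSchmidt a b))) = 4 * (a ^ 2 - b ^ 2) ^ 2 :=
  CHSHsq_of_corr_eq_diagonal_zero_zero (corr_ptrB_ket0TensorSchmidt a b)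

theorem CHSHsq_ptrA_ket0TensorSchmidt :
    CHSHsq (ptrA (pureState3 (ket0TensorSchmidt a b))) =
      4 * ((2 * a * b) ^ 2 + (a ^ 2 + b ^ 2) ^ 2) := by
  have hmin : ∀ i, ![2 * a * b, -(2 * a * b), a ^ 2 + b ^ 2] 0 ^ 2 ≤
      ![2 * a * b, -(2 * a * b), a ^ 2 + b ^ 2] i ^ 2 := by
    intro i
    fin_cases i <;> simp
    nlinarith [sq_nonneg (a ^ 2 - b ^ 2)]
  rw [CHSHsq_of_corr_eq_diagonal (corr_ptrA_ket0TensorSchmidt a b) hmin, Fin.sum_univ_three]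
  simp only [Matrix.cons_val_zero, Matrix.cons_val_one, Matrix.cons_val_two, Matrix.head_cons,
    Matrix.tail_cons]
  ring

end ket0TensorSchmidt

theorem chsh_values_A_BC_state_general
    (δ : ℝ)
    (ψ : Fin 2 × Fin 2 × Fin 2 → ℂ)
    (hψ : ψ = fun p => ket0 p.1 *
      ((Real.cos δ : ℂ) * (ket0 p.2.1 * ket0 p.2.2) +
       (Real.sin δ : ℂ) * (ket1 p.2.1 * ket1 p.2.2)))
    (ρ : Matrix (Fin 2 × Fin 2 × Fin 2) (Fin 2 × Fin 2 × Fin 2) ℂ)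
    (hρ : ρ = pureState3 ψ) :
    CHSHsq (ptrC ρ) = 4 * (Real.cos δ ^ 2 - Real.sin δ ^ 2) ^ 2 ∧
    CHSHsq (ptrB ρ) = 4 * (Real.cos δ ^ 2 - Real.sin δ ^ 2) ^ 2 ∧
    CHSHsq (ptrA ρ) = 16 * Real.cos δ ^ 2 * Real.sin δ ^ 2 + 4 := by
  have hstate : ρ = pureState3 (ket0TensorSchmidt (Real.cos δ) (Real.sin δ)) := by
    rw [hρ, hψ]
    rfl
  subst hstate
  refine ⟨CHSHsq_ptrC_ket0TensorSchmidt _ _, CHSHsq_ptrB_ket0TensorSchmidt _ _, ?_⟩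
  rw [CHSHsq_ptrA_ket0TensorSchmidt, Real.cos_sq_add_sin_sq]
  ring

theorem chsh_values_A_BC_state
    (δ : ℝ) (hsin : Real.sin δ > 0) (hcos : Real.cos δ ≥ Real.sin δ)
    (ψ : Fin 2 × Fin 2 × Fin 2 → ℂ)
    (hψ : ψ = fun p => ket0 p.1 *
      ((Real.cos δ : ℂ) * (ket0 p.2.1 * ket0 p.2.2) +
       (Real.sin δ : ℂ) * (ket1 p.2.1 * ket1 p.2.2)))
    (ρ : Matrix (Fin 2 × Fin 2 × Fin 2) (Fin 2 × Fin 2 × Fin 2) ℂ)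
    (hρ : ρ = pureState3 ψ) :
    CHSHsq (ptrC ρ) = 4 * (Real.cos δ ^ 2 - Real.sin δ ^ 2) ^ 2 ∧
    CHSHsq (ptrB ρ) = 4 * (Real.cos δ ^ 2 - Real.sin δ ^ 2) ^ 2 ∧
    CHSHsq (ptrA ρ) = 16 * Real.cos δ ^ 2 * Real.sin δ ^ 2 + 4 :=
  chsh_values_A_BC_state_general δ ψ hψ ρ hρ
end

section
/- Let δ ∈ ℝ with cos δ ≥ sin δ > 0, let |ψ_{A-BC}⟩ = |0⟩ ⊗ (cos δ |00⟩ + sin δ |11⟩) and ρ_ABC = |ψ_{A-BC}⟩⟨ψ_{A-BC}|. Then ⟨CHSH⟩²_{ρ_AB} + ⟨CHSH⟩²_{ρ_BC} + ⟨CHSH⟩²_{ρ_AC} = 4 cos²(2δ) + 8. -/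
open Matrix Finset

section Aux

open Matrix Finset

lemma inf_eigenvalues_eq {n : Type*} [Fintype n] [DecidableEq n] [Nonempty n]
    {A : Matrix n n ℝ} (hA : A.IsHermitian) (t : ℝ)
    (hpsd : (A - t • 1).PosSemidef) (hdet : (A - t • 1).det = 0) :
    Finset.univ.inf' Finset.univ_nonempty hA.eigenvalues = t := by
  have hdet2 : (A - t • (1 : Matrix n n ℝ)).det = ∏ i, (hA.eigenvalues i - t) := by
    have hst : (hA.eigenvectorUnitary : Matrix n n ℝ) *
        star (hA.eigenvectorUnitary : Matrix n n ℝ) = 1 :=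
      Matrix.mem_unitaryGroup_iff.mp hA.eigenvectorUnitary.2
    have key : A - t • 1 = (hA.eigenvectorUnitary : Matrix n n ℝ) *
        diagonal (fun i => hA.eigenvalues i - t) *
        star (hA.eigenvectorUnitary : Matrix n n ℝ) := by
      have hd : diagonal (fun i => hA.eigenvalues i - t)
          = diagonal (RCLike.ofReal ∘ hA.eigenvalues) - t • 1 := by
        rw [smul_one_eq_diagonal, ← diagonal_sub]
        rfl
      rw [hd, Matrix.mul_sub, Matrix.sub_mul]
      conv_lhs => rw [hA.spectral_theorem]
      rw [Unitary.conjStarAlgAut_apply]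
      congr 1
      rw [Matrix.mul_smul, Matrix.smul_mul, Matrix.mul_one, hst]
    rw [key, det_mul_right_comm, hst, one_mul, det_diagonal]
  have hle : ∀ i ∈ Finset.univ, t ≤ hA.eigenvalues i := by
    intro i _
    have hv := hA.mulVec_eigenvectorBasis i
    set v : n → ℝ := ⇑(hA.eigenvectorBasis i) with hvdef
    have hvne : v ≠ 0 := by
      intro h
      exact hA.eigenvectorBasis.orthonormal.ne_zero i (by ext x; exact congrFun h x)
    have hq : 0 ≤ star v ⬝ᵥ ((A - t • 1) *ᵥ v) := hpsd.dotProduct_mulVec_nonneg v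
    have hmv : (A - t • 1) *ᵥ v = (hA.eigenvalues i - t) • v := by
      rw [sub_mulVec, hv, smul_mulVec, one_mulVec, sub_smul]
    rw [hmv] at hq
    have hvv : 0 < v ⬝ᵥ v :=
      lt_of_le_of_ne (Finset.sum_nonneg fun j _ => mul_self_nonneg _)
        (fun h => hvne (dotProduct_self_eq_zero.mp h.symm))
    have hdp : star v ⬝ᵥ ((hA.eigenvalues i - t) • v) = (hA.eigenvalues i - t) * (v ⬝ᵥ v) := by
      simp [dotProduct_smul, star_trivial]
    rw [hdp] at hq
    nlinarith
  obtain ⟨i, -, hi⟩ := Finset.prod_eq_zero_iff.mp (hdet2 ▸ hdet)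
  refine le_antisymm ?_ (Finset.le_inf' _ _ hle)
  exact (Finset.inf'_le _ (Finset.mem_univ i)).trans (by linarith [sub_eq_zero.mp hi])

lemma psd_transpose_mul_self3 (M : Matrix (Fin 3) (Fin 3) ℝ) : (Mᵀ * M).PosSemidef := by
  simpa [Matrix.conjTranspose_eq_transpose_of_trivial] using
    Matrix.posSemidef_conjTranspose_mul_self M

lemma CHSH_diag (c : ℝ) (ρ : Matrix (Fin 2 × Fin 2) (Fin 2 × Fin 2) ℂ)
    (hM : corr ρ = !![0,0,0;0,0,0;0,0,c]) : CHSHsq ρ = 4 * c^2 := by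
  have hmin : Finset.univ.inf' Finset.univ_nonempty (corr_herm ρ).eigenvalues = 0 := by
    apply inf_eigenvalues_eq
    · simpa using psd_transpose_mul_self3 (corr ρ)
    · rw [show (corr ρ)ᵀ * corr ρ - (0:ℝ) • 1 = (corr ρ)ᵀ * corr ρ by simp]
      rw [Matrix.det_mul, hM]
      norm_num [Matrix.det_fin_three]
  have htr : ((corr ρ)ᵀ * corr ρ).trace = c^2 := by
    rw [hM]
    simp [Matrix.trace, Matrix.mul_apply, Fin.sum_univ_succ, Matrix.diag,
      Matrix.vecHead, Matrix.vecTail]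
    ring
  rw [CHSHsq, hmin, htr]
  ring

lemma CHSH_bell (s : ℝ) (hs : s^2 ≤ 1) (ρ : Matrix (Fin 2 × Fin 2) (Fin 2 × Fin 2) ℂ)
    (hM : corr ρ = !![s,0,0;0,-s,0;0,0,1]) : CHSHsq ρ = 4 * (s^2 + 1) := by
  have hdiag : (corr ρ)ᵀ * corr ρ - (s^2) • 1 = Matrix.diagonal ![0, 0, 1 - s^2] := by
    rw [hM]
    ext i j
    fin_cases i <;> fin_cases j <;>
      simp [Matrix.mul_apply, Fin.sum_univ_succ, Matrix.diagonal, Matrix.one_apply,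
        Matrix.vecHead, Matrix.vecTail] <;> ring
  have hmin : Finset.univ.inf' Finset.univ_nonempty (corr_herm ρ).eigenvalues = s^2 := by
    apply inf_eigenvalues_eq
    · rw [hdiag]
      apply Matrix.PosSemidef.diagonal
      intro i
      fin_cases i <;> simp [Matrix.vecHead, Matrix.vecTail]
      nlinarith [sq_abs s, abs_nonneg s]
    · rw [hdiag]
      simp [Matrix.det_diagonal, Fin.prod_univ_succ]
  have htr : ((corr ρ)ᵀ * corr ρ).trace = 2*s^2+1 := by
    rw [hM]
    simp [Matrix.trace, Matrix.mul_apply, Fin.sum_univ_succ, Matrix.diag,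
      Matrix.vecHead, Matrix.vecTail]
    ring
  rw [CHSHsq, hmin, htr]
  ring

lemma corr_ptrC_eq (δ : ℝ) : corr (ptrC (pureState3 (fun p => ket0 p.1 *
      ((Real.cos δ : ℂ) * (ket0 p.2.1 * ket0 p.2.2) +
       (Real.sin δ : ℂ) * (ket1 p.2.1 * ket1 p.2.2))))) =
      !![0,0,0;0,0,0;0,0,Real.cos (2*δ)] := by
    ext i j
    fin_cases i <;> fin_cases j
    all_goals simp [corr, pauli, kron2, ptrC, pureState3, ket0, ket1, Matrix.trace,
      Matrix.mul_apply, Fintype.sum_prod_type, Fin.sum_univ_two, Matrix.diag,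
      Matrix.vecHead, Matrix.vecTail]
    all_goals try simp [Real.cos_two_mul', Complex.cos_ofReal_re, Complex.sin_ofReal_re,
      Complex.ext_iff]
    all_goals first | ring1 | linarith [Real.sin_sq_add_cos_sq δ]

lemma corr_ptrB_eq (δ : ℝ) : corr (ptrB (pureState3 (fun p => ket0 p.1 *
      ((Real.cos δ : ℂ) * (ket0 p.2.1 * ket0 p.2.2) +
       (Real.sin δ : ℂ) * (ket1 p.2.1 * ket1 p.2.2))))) =
      !![0,0,0;0,0,0;0,0,Real.cos (2*δ)] := by
    ext i j
    fin_cases i <;> fin_cases j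
    all_goals simp [corr, pauli, kron2, ptrB, pureState3, ket0, ket1, Matrix.trace,
      Matrix.mul_apply, Fintype.sum_prod_type, Fin.sum_univ_two, Matrix.diag,
      Matrix.vecHead, Matrix.vecTail]
    all_goals try simp [Real.cos_two_mul', Complex.cos_ofReal_re, Complex.sin_ofReal_re,
      Complex.ext_iff]
    all_goals first | ring1 | linarith [Real.sin_sq_add_cos_sq δ]

lemma corr_ptrA_eq (δ : ℝ) : corr (ptrA (pureState3 (fun p => ket0 p.1 *
      ((Real.cos δ : ℂ) * (ket0 p.2.1 * ket0 p.2.2) +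
       (Real.sin δ : ℂ) * (ket1 p.2.1 * ket1 p.2.2))))) =
      !![Real.sin (2*δ),0,0;0,-Real.sin (2*δ),0;0,0,1] := by
    ext i j
    fin_cases i <;> fin_cases j
    all_goals simp [corr, pauli, kron2, ptrA, pureState3, ket0, ket1, Matrix.trace,
      Matrix.mul_apply, Fintype.sum_prod_type, Fin.sum_univ_two, Matrix.diag,
      Matrix.vecHead, Matrix.vecTail]
    all_goals try simp [Real.sin_two_mul, Complex.cos_ofReal_re, Complex.sin_ofReal_re,
      Complex.ext_iff]
    all_goals first | ring1 | linarith [Real.sin_sq_add_cos_sq δ]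

end Aux

theorem chsh_sum_A_BC_state
    (δ : ℝ) (hsin : Real.sin δ > 0) (hcos : Real.cos δ ≥ Real.sin δ)
    (ψ : Fin 2 × Fin 2 × Fin 2 → ℂ)
    (hψ : ψ = fun p => ket0 p.1 *
      ((Real.cos δ : ℂ) * (ket0 p.2.1 * ket0 p.2.2) +
       (Real.sin δ : ℂ) * (ket1 p.2.1 * ket1 p.2.2)))
    (ρ : Matrix (Fin 2 × Fin 2 × Fin 2) (Fin 2 × Fin 2 × Fin 2) ℂ)
    (hρ : ρ = pureState3 ψ) :
    CHSHsq (ptrC ρ) + CHSHsq (ptrA ρ) + CHSHsq (ptrB ρ) =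
      4 * Real.cos (2 * δ) ^ 2 + 8 := by
  subst hρ hψ
  rw [CHSH_diag (Real.cos (2*δ)) _ (corr_ptrC_eq δ),
      CHSH_diag (Real.cos (2*δ)) _ (corr_ptrB_eq δ),
      CHSH_bell (Real.sin (2*δ)) (Real.sin_sq_le_one (2*δ)) _ (corr_ptrA_eq δ)]
  have := Real.sin_sq_add_cos_sq (2*δ)
  linarith
end

section
/- Let δ ∈ ℝ with cos δ ≥ sin δ > 0, let |ψ_{A-BC}⟩ = |0⟩ ⊗ (cos δ |00⟩ + sin δ |11⟩) and ρ_ABC = |ψ_{A-BC}⟩⟨ψ_{A-BC}|. Then the maximal CHSH violations of the two-qubit reductions obey the trade-off relation 8 ≤ ⟨CHSH⟩²_{ρ_AB} + ⟨CHSH⟩²_{ρ_BC} + ⟨CHSH⟩²_{ρ_AC} < 12. -/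
open Matrix Finset

lemma sum_eig {A : Matrix (Fin 3) (Fin 3) ℝ} (hA : A.IsHermitian) :
    ∑ i, hA.eigenvalues i = A.trace := by
  nth_rw 2 [hA.spectral_theorem]
  rw [Unitary.conjStarAlgAut_apply]
  rw [Matrix.trace_mul_comm, ← mul_assoc]
  simp [Unitary.coe_star_mul_self, Matrix.trace_diagonal]

lemma eig_mem (a b : ℝ) {A : Matrix (Fin 3) (Fin 3) ℝ} (hA : A.IsHermitian)
    (hAeq : A = Matrix.diagonal ![a, a, b]) (i : Fin 3) :
    hA.eigenvalues i = a ∨ hA.eigenvalues i = b := by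
  have h := hA.eigenvalues_mem_spectrum_real i
  set μ := hA.eigenvalues i with hμ
  rw [spectrum.mem_iff, Matrix.isUnit_iff_isUnit_det, isUnit_iff_ne_zero, not_not] at h
  rw [hAeq, Matrix.algebraMap_eq_diagonal, Matrix.diagonal_sub, Matrix.det_diagonal] at h
  simp [Fin.prod_univ_succ, Pi.algebraMap_apply, sub_eq_zero, mul_eq_zero] at h
  tauto

lemma inf_eig (a b : ℝ) (hab : a ≤ b) {A : Matrix (Fin 3) (Fin 3) ℝ} (hA : A.IsHermitian)
    (hAeq : A = Matrix.diagonal ![a, a, b]) :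
    Finset.univ.inf' Finset.univ_nonempty hA.eigenvalues = a := by
  have hmem := eig_mem a b hA hAeq
  have hsum : ∑ i, hA.eigenvalues i = 2 * a + b := by
    rw [sum_eig hA, hAeq, Matrix.trace_diagonal]
    simp [Fin.sum_univ_succ]; ring
  apply le_antisymm
  · by_contra hlt
    push_neg at hlt
    have hall : ∀ i, hA.eigenvalues i = b := by
      intro i
      rcases hmem i with h | h
      · exact absurd (h ▸ Finset.inf'_le _ (Finset.mem_univ i)) (not_le.mpr hlt)
      · exact h
    rw [Fin.sum_univ_three, hall, hall, hall] at hsum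
    have hba : b = a := by linarith
    have : Finset.univ.inf' Finset.univ_nonempty hA.eigenvalues ≤ hA.eigenvalues 0 :=
      Finset.inf'_le _ (Finset.mem_univ 0)
    rw [hall 0, hba] at this
    linarith
  · apply Finset.le_inf'
    intro i _
    rcases hmem i with h | h <;> simp [h, hab]
set_option maxHeartbeats 1000000 in
theorem chsh_tradeoff_A_BC_state
    (δ : ℝ) (hsin : Real.sin δ > 0) (hcos : Real.cos δ ≥ Real.sin δ)
    (ψ : Fin 2 × Fin 2 × Fin 2 → ℂ)
    (hψ : ψ = fun p => ket0 p.1 *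
      ((Real.cos δ : ℂ) * (ket0 p.2.1 * ket0 p.2.2) +
       (Real.sin δ : ℂ) * (ket1 p.2.1 * ket1 p.2.2)))
    (ρ : Matrix (Fin 2 × Fin 2 × Fin 2) (Fin 2 × Fin 2 × Fin 2) ℂ)
    (hρ : ρ = pureState3 ψ) :
    8 ≤ CHSHsq (ptrC ρ) + CHSHsq (ptrA ρ) + CHSHsq (ptrB ρ) ∧
      CHSHsq (ptrC ρ) + CHSHsq (ptrA ρ) + CHSHsq (ptrB ρ) < 12 := by
  subst hρ hψ
  set c := Real.cos δ with hc
  set s := Real.sin δ with hs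
  have pyth : s ^ 2 + c ^ 2 = 1 := Real.sin_sq_add_cos_sq δ
  -- correlation matrices
  have hM1 : corr (ptrC (pureState3 (fun p => ket0 p.1 *
      ((c : ℂ) * (ket0 p.2.1 * ket0 p.2.2) + (s : ℂ) * (ket1 p.2.1 * ket1 p.2.2))))) =
      !![0,0,0;0,0,0;0,0,c^2 - s^2] := by
    ext i j
    fin_cases i <;> fin_cases j <;>
      simp [corr, ptrC, pureState3, pauli, kron2, Matrix.trace, Matrix.mul_apply,
        Fintype.sum_prod_type, Fin.sum_univ_succ, ket0, ket1, Complex.ext_iff,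
        Matrix.vecHead, Matrix.vecTail, Complex.cos_ofReal_re, Complex.sin_ofReal_re] <;> ring
  have hM3 : corr (ptrB (pureState3 (fun p => ket0 p.1 *
      ((c : ℂ) * (ket0 p.2.1 * ket0 p.2.2) + (s : ℂ) * (ket1 p.2.1 * ket1 p.2.2))))) =
      !![0,0,0;0,0,0;0,0,c^2 - s^2] := by
    ext i j
    fin_cases i <;> fin_cases j <;>
      simp [corr, ptrB, pureState3, pauli, kron2, Matrix.trace, Matrix.mul_apply,
        Fintype.sum_prod_type, Fin.sum_univ_succ, ket0, ket1, Complex.ext_iff,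
        Matrix.vecHead, Matrix.vecTail, Complex.cos_ofReal_re, Complex.sin_ofReal_re] <;> ring
  have hM2 : corr (ptrA (pureState3 (fun p => ket0 p.1 *
      ((c : ℂ) * (ket0 p.2.1 * ket0 p.2.2) + (s : ℂ) * (ket1 p.2.1 * ket1 p.2.2))))) =
      !![2*c*s,0,0;0,-(2*c*s),0;0,0,1] := by
    ext i j
    fin_cases i <;> fin_cases j <;>
      simp [corr, ptrA, pureState3, pauli, kron2, Matrix.trace, Matrix.mul_apply,
        Fintype.sum_prod_type, Fin.sum_univ_succ, ket0, ket1, Complex.ext_iff,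
        Matrix.vecHead, Matrix.vecTail, Complex.cos_ofReal_re, Complex.sin_ofReal_re] <;>
      (first | ring1 | linarith [pyth])
  -- Gram matrices
  have hN1 : (corr (ptrC (pureState3 (fun p => ket0 p.1 *
      ((c : ℂ) * (ket0 p.2.1 * ket0 p.2.2) + (s : ℂ) * (ket1 p.2.1 * ket1 p.2.2))))))ᵀ *
      corr (ptrC (pureState3 (fun p => ket0 p.1 *
      ((c : ℂ) * (ket0 p.2.1 * ket0 p.2.2) + (s : ℂ) * (ket1 p.2.1 * ket1 p.2.2))))) =
      Matrix.diagonal ![0, 0, (c^2 - s^2)^2] := by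
    rw [hM1]; ext i j
    fin_cases i <;> fin_cases j <;>
      simp [Matrix.mul_apply, Fin.sum_univ_succ, Matrix.diagonal, Matrix.vecHead,
        Matrix.vecTail] <;> ring
  have hN3 : (corr (ptrB (pureState3 (fun p => ket0 p.1 *
      ((c : ℂ) * (ket0 p.2.1 * ket0 p.2.2) + (s : ℂ) * (ket1 p.2.1 * ket1 p.2.2))))))ᵀ *
      corr (ptrB (pureState3 (fun p => ket0 p.1 *
      ((c : ℂ) * (ket0 p.2.1 * ket0 p.2.2) + (s : ℂ) * (ket1 p.2.1 * ket1 p.2.2))))) =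
      Matrix.diagonal ![0, 0, (c^2 - s^2)^2] := by
    rw [hM3]; ext i j
    fin_cases i <;> fin_cases j <;>
      simp [Matrix.mul_apply, Fin.sum_univ_succ, Matrix.diagonal, Matrix.vecHead,
        Matrix.vecTail] <;> ring
  have hN2 : (corr (ptrA (pureState3 (fun p => ket0 p.1 *
      ((c : ℂ) * (ket0 p.2.1 * ket0 p.2.2) + (s : ℂ) * (ket1 p.2.1 * ket1 p.2.2))))))ᵀ *
      corr (ptrA (pureState3 (fun p => ket0 p.1 *
      ((c : ℂ) * (ket0 p.2.1 * ket0 p.2.2) + (s : ℂ) * (ket1 p.2.1 * ket1 p.2.2))))) =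
      Matrix.diagonal ![4*c^2*s^2, 4*c^2*s^2, 1] := by
    rw [hM2]; ext i j
    fin_cases i <;> fin_cases j <;>
      simp [Matrix.mul_apply, Fin.sum_univ_succ, Matrix.diagonal, Matrix.vecHead,
        Matrix.vecTail] <;> ring
  have h4 : 4 * c^2 * s^2 ≤ 1 := by nlinarith [sq_nonneg (c^2 - s^2)]
  have e1 : CHSHsq (ptrC (pureState3 (fun p => ket0 p.1 *
      ((c : ℂ) * (ket0 p.2.1 * ket0 p.2.2) + (s : ℂ) * (ket1 p.2.1 * ket1 p.2.2))))) =
      4 * (c^2 - s^2)^2 := by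
    rw [CHSHsq, inf_eig 0 ((c^2 - s^2)^2) (sq_nonneg _) _ hN1, hN1, Matrix.trace_diagonal]
    simp [Fin.sum_univ_succ]
  have e3 : CHSHsq (ptrB (pureState3 (fun p => ket0 p.1 *
      ((c : ℂ) * (ket0 p.2.1 * ket0 p.2.2) + (s : ℂ) * (ket1 p.2.1 * ket1 p.2.2))))) =
      4 * (c^2 - s^2)^2 := by
    rw [CHSHsq, inf_eig 0 ((c^2 - s^2)^2) (sq_nonneg _) _ hN3, hN3, Matrix.trace_diagonal]
    simp [Fin.sum_univ_succ]
  have e2 : CHSHsq (ptrA (pureState3 (fun p => ket0 p.1 *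
      ((c : ℂ) * (ket0 p.2.1 * ket0 p.2.2) + (s : ℂ) * (ket1 p.2.1 * ket1 p.2.2))))) =
      4 * (4*c^2*s^2 + 1) := by
    rw [CHSHsq, inf_eig (4*c^2*s^2) 1 h4 _ hN2, hN2, Matrix.trace_diagonal]
    simp [Fin.sum_univ_succ]
    try ring
  rw [e1, e2, e3]
  have hcpos : 0 < c := lt_of_lt_of_le hsin hcos
  constructor
  · nlinarith [sq_nonneg (c^2 - s^2), sq_nonneg (c*s)]
  · nlinarith [mul_pos hcpos hsin, sq_nonneg (c*s - 1)]
end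

section
/- Let a, b, c > 0 with d = 1 − (a+b+c) ≥ 0, let |ψ_W⟩ = √a|001⟩ + √b|010⟩ + √c|100⟩ + √d|000⟩ and ρ_ABC = |ψ_W⟩⟨ψ_W|. Set V = [(√a+√b+√c)² + d]·[(√a+√b−√c)² + d]·[(√a−√b+√c)² + d]·[(−√a+√b+√c)² + d]. Then ⟨CHSH⟩²_{ρ_AB} + ⟨CHSH⟩²_{ρ_BC} + ⟨CHSH⟩²_{ρ_AC} = 2[3(1 + √V) + 4(ab + ac + bc)]. -/
/-!
Each two-qubit marginal of the W-type state is `|φ⟩⟨φ| + v² |00⟩⟨00|` with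
`φ = w |00⟩ + x |01⟩ + y |10⟩`, so its correlation matrix is `M = !![p, 0, q; 0, p, 0; r, 0, s]`.
The eigenvalues of `Mᵀ M` are `p²` and the two eigenvalues `(T ± √Δ) / 2` of `Nᵀ N` for the block
`N = !![p, q; r, s]`, and the discriminant `Δ` factors into the product `V` of the statement, the
same for all three marginals. The smallest of them is `(T - √V) / 2`, because
`V - (T - 2p²)² = 64 x² y² w² v² ≥ 0`. In the sum of `4 (tr (Mᵀ M) - τ₃)` over the marginals the
polynomial parts collapse by `a + b + c + d = 1`.
-/

open Matrix Finset

open Polynomial in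
theorem Matrix.IsHermitian.det_scalar_sub {n : Type*} [Fintype n] [DecidableEq n]
    {A : Matrix n n ℝ} (hA : A.IsHermitian) (t : ℝ) :
    (scalar n t - A).det = ∏ i, (t - hA.eigenvalues i) := by
  rw [← eval_charpoly, hA.charpoly_eq, eval_prod]
  simp

theorem Matrix.IsHermitian.inf'_eigenvalues_eq_of_det {n : Type*} [Fintype n] [DecidableEq n]
    [Nonempty n] {A : Matrix n n ℝ} (hA : A.IsHermitian) {r : ℝ} {f : ℝ → ℝ}
    (hdet : ∀ t, (scalar n t - A).det = (t - r) * f t) (hf : ∀ t, f t = 0 → r ≤ t) :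
    univ.inf' univ_nonempty hA.eigenvalues = r := by
  have hroot : ∀ t, (t - r) * f t = 0 ↔ ∃ i, t = hA.eigenvalues i := by
    intro t
    rw [← hdet, hA.det_scalar_sub, prod_eq_zero_iff]
    simp only [mem_univ, true_and, sub_eq_zero]
  obtain ⟨i, hi⟩ := (hroot r).mp (by ring)
  refine le_antisymm (hi.symm ▸ inf'_le _ (mem_univ i)) (le_inf' _ _ fun j _ => ?_)
  rcases mul_eq_zero.mp ((hroot _).mpr ⟨j, rfl⟩) with h | h
  · exact (sub_eq_zero.mp h).ge
  · exact hf _ h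

theorem CHSHsq_eq_of_corr_eq {ρ : Matrix (Fin 2 × Fin 2) (Fin 2 × Fin 2) ℂ} {p q r s : ℝ}
    (hM : corr ρ = !![p, 0, q; 0, p, 0; r, 0, s])
    (hmin : p ^ 2 + q ^ 2 + r ^ 2 + s ^ 2
      - √(((p - s) ^ 2 + (q + r) ^ 2) * ((p + s) ^ 2 + (q - r) ^ 2)) ≤ 2 * p ^ 2) :
    CHSHsq ρ = 2 * (3 * p ^ 2 + q ^ 2 + r ^ 2 + s ^ 2)
      + 2 * √(((p - s) ^ 2 + (q + r) ^ 2) * ((p + s) ^ 2 + (q - r) ^ 2)) := by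
  set T := p ^ 2 + q ^ 2 + r ^ 2 + s ^ 2
  set S := √(((p - s) ^ 2 + (q + r) ^ 2) * ((p + s) ^ 2 + (q - r) ^ 2)) with hS
  have hS0 : 0 ≤ S := Real.sqrt_nonneg _
  have hS2 : S ^ 2 = T ^ 2 - 4 * (p * s - q * r) ^ 2 := by
    rw [hS, Real.sq_sqrt (by positivity)]
    ring
  have hdet : ∀ t, (scalar (Fin 3) t - (corr ρ)ᵀ * corr ρ).det
      = (t - (T - S) / 2) * ((t - p ^ 2) * (t - (T + S) / 2)) := by
    intro t
    rw [hM]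
    simp only [scalar_apply, det_fin_three, Fin.isValue, Matrix.sub_apply, diagonal_apply_eq,
      mul_apply, transpose_apply, of_apply, cons_val', cons_val_zero, cons_val_fin_one,
      Fin.sum_univ_three, cons_val_one, mul_zero, add_zero, Matrix.cons_val, zero_add, ne_eq,
      Fin.reduceEq, not_false_eq_true, diagonal_apply_ne, zero_mul, sub_self, sub_zero,
      zero_ne_one, one_ne_zero, zero_sub, neg_add_rev]
    linear_combination (t - p ^ 2) / 4 * hS2
  have hinf : univ.inf' univ_nonempty (corr_herm ρ).eigenvalues = (T - S) / 2 := by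
    refine (corr_herm ρ).inf'_eigenvalues_eq_of_det hdet fun t ht => ?_
    rcases mul_eq_zero.mp ht with h | h
    · linarith [sub_eq_zero.mp h]
    · linarith [sub_eq_zero.mp h]
  have htr : ((corr ρ)ᵀ * corr ρ).trace = 2 * p ^ 2 + q ^ 2 + r ^ 2 + s ^ 2 := by
    rw [hM]
    simp only [trace_fin_three, Fin.isValue, mul_apply, transpose_apply, of_apply, cons_val',
      cons_val_zero, cons_val_fin_one, Fin.sum_univ_three, cons_val_one, mul_zero, add_zero,
      Matrix.cons_val, zero_add]
    ring
  rw [CHSHsq, hinf, htr]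
  ring

/-- `|φ⟩⟨φ| + v² |00⟩⟨00|` with `φ = w |00⟩ + x |01⟩ + y |10⟩`. -/
def reducedWState (w x y v : ℝ) : Matrix (Fin 2 × Fin 2) (Fin 2 × Fin 2) ℂ :=
  fun p q => ((!![w, x; y, 0] p.1 p.2 * !![w, x; y, 0] q.1 q.2
    + !![v, 0; 0, 0] p.1 p.2 * !![v, 0; 0, 0] q.1 q.2 : ℝ) : ℂ)

theorem corr_reducedWState (w x y v : ℝ) :
    corr (reducedWState w x y v) =
      !![2 * x * y, 0, 2 * y * w; 0, 2 * x * y, 0; 2 * x * w, 0, w ^ 2 + v ^ 2 - x ^ 2 - y ^ 2] := by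
  ext i j
  fin_cases i <;> fin_cases j <;>
    simp [corr, reducedWState, kron2, pauli, trace, mul_apply, Fintype.sum_prod_type,
      Fin.sum_univ_two, Complex.mul_re] <;>
    ring

theorem CHSHsq_reducedWState (w x y v V : ℝ)
    (hV : V = ((x + y + v) ^ 2 + w ^ 2) * ((x + y - v) ^ 2 + w ^ 2) *
      ((x - y + v) ^ 2 + w ^ 2) * ((-x + y + v) ^ 2 + w ^ 2)) :
    CHSHsq (reducedWState w x y v) =
      2 * (12 * x ^ 2 * y ^ 2 + 4 * x ^ 2 * w ^ 2 + 4 * y ^ 2 * w ^ 2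
        + (w ^ 2 + v ^ 2 - x ^ 2 - y ^ 2) ^ 2) + 2 * √V := by
  have hΔ : ((2 * x * y - (w ^ 2 + v ^ 2 - x ^ 2 - y ^ 2)) ^ 2 + (2 * y * w + 2 * x * w) ^ 2)
      * ((2 * x * y + (w ^ 2 + v ^ 2 - x ^ 2 - y ^ 2)) ^ 2 + (2 * y * w - 2 * x * w) ^ 2) = V := by
    rw [hV]
    ring
  have hgap : (4 * y ^ 2 * w ^ 2 + 4 * x ^ 2 * w ^ 2 + (w ^ 2 + v ^ 2 - x ^ 2 - y ^ 2) ^ 2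
      - 4 * x ^ 2 * y ^ 2) ^ 2 ≤ V := by
    have h : V - (4 * y ^ 2 * w ^ 2 + 4 * x ^ 2 * w ^ 2 + (w ^ 2 + v ^ 2 - x ^ 2 - y ^ 2) ^ 2
        - 4 * x ^ 2 * y ^ 2) ^ 2 = 64 * (x * y * w * v) ^ 2 := by
      rw [hV]
      ring
    linarith [sq_nonneg (x * y * w * v)]
  rw [CHSHsq_eq_of_corr_eq (corr_reducedWState w x y v)
    (by rw [hΔ]; linarith [Real.le_sqrt_of_sq_le hgap]), hΔ]
  ring

noncomputable def wState (a b c d : ℝ) : Fin 2 × Fin 2 × Fin 2 → ℂ := fun p =>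
  (√a : ℂ) * (ket0 p.1 * ket0 p.2.1 * ket1 p.2.2) +
  (√b : ℂ) * (ket0 p.1 * ket1 p.2.1 * ket0 p.2.2) +
  (√c : ℂ) * (ket1 p.1 * ket0 p.2.1 * ket0 p.2.2) +
  (√d : ℂ) * (ket0 p.1 * ket0 p.2.1 * ket0 p.2.2)

theorem ptrC_pureState3_wState (a b c d : ℝ) :
    ptrC (pureState3 (wState a b c d)) = reducedWState √d √b √c √a := by
  ext ⟨p₁, p₂⟩ ⟨q₁, q₂⟩
  fin_cases p₁ <;> fin_cases p₂ <;> fin_cases q₁ <;> fin_cases q₂ <;>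
    simp [ptrC, pureState3, wState, reducedWState, ket0, ket1, Fin.sum_univ_two]

theorem ptrA_pureState3_wState (a b c d : ℝ) :
    ptrA (pureState3 (wState a b c d)) = reducedWState √d √a √b √c := by
  ext ⟨p₁, p₂⟩ ⟨q₁, q₂⟩
  fin_cases p₁ <;> fin_cases p₂ <;> fin_cases q₁ <;> fin_cases q₂ <;>
    simp [ptrA, pureState3, wState, reducedWState, ket0, ket1, Fin.sum_univ_two]

theorem ptrB_pureState3_wState (a b c d : ℝ) :
    ptrB (pureState3 (wState a b c d)) = reducedWState √d √a √c √b := by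
  ext ⟨p₁, p₂⟩ ⟨q₁, q₂⟩
  fin_cases p₁ <;> fin_cases p₂ <;> fin_cases q₁ <;> fin_cases q₂ <;>
    simp [ptrB, pureState3, wState, reducedWState, ket0, ket1, Fin.sum_univ_two]

theorem chsh_sum_W_state
    (a b c d : ℝ) (ha : 0 < a) (hb : 0 < b) (hc : 0 < c)
    (hd : d = 1 - (a + b + c)) (hd0 : 0 ≤ d)
    (ψ : Fin 2 × Fin 2 × Fin 2 → ℂ)
    (hψ : ψ = fun p =>
      (Real.sqrt a : ℂ) * (ket0 p.1 * ket0 p.2.1 * ket1 p.2.2) +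
      (Real.sqrt b : ℂ) * (ket0 p.1 * ket1 p.2.1 * ket0 p.2.2) +
      (Real.sqrt c : ℂ) * (ket1 p.1 * ket0 p.2.1 * ket0 p.2.2) +
      (Real.sqrt d : ℂ) * (ket0 p.1 * ket0 p.2.1 * ket0 p.2.2))
    (ρ : Matrix (Fin 2 × Fin 2 × Fin 2) (Fin 2 × Fin 2 × Fin 2) ℂ)
    (hρ : ρ = pureState3 ψ)
    (V : ℝ)
    (hV : V = ((Real.sqrt a + Real.sqrt b + Real.sqrt c) ^ 2 + d) *
              ((Real.sqrt a + Real.sqrt b - Real.sqrt c) ^ 2 + d) *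
              ((Real.sqrt a - Real.sqrt b + Real.sqrt c) ^ 2 + d) *
              ((-Real.sqrt a + Real.sqrt b + Real.sqrt c) ^ 2 + d)) :
    CHSHsq (ptrC ρ) + CHSHsq (ptrA ρ) + CHSHsq (ptrB ρ) =
      2 * (3 * (1 + Real.sqrt V) + 4 * (a * b + a * c + b * c)) := by
  have hψW : ψ = wState a b c d := hψ
  subst hρ hψW
  rw [ptrC_pureState3_wState, ptrA_pureState3_wState, ptrB_pureState3_wState,
    CHSHsq_reducedWState _ _ _ _ V (by rw [Real.sq_sqrt hd0]; linear_combination hV),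
    CHSHsq_reducedWState _ _ _ _ V (by rw [Real.sq_sqrt hd0]; linear_combination hV),
    CHSHsq_reducedWState _ _ _ _ V (by rw [Real.sq_sqrt hd0]; linear_combination hV)]
  simp only [Real.sq_sqrt ha.le, Real.sq_sqrt hb.le, Real.sq_sqrt hc.le, Real.sq_sqrt hd0]
  subst hd
  ring
end

section
/- Let δ ∈ (0, π/4], α, β, γ ∈ (0, π/2], φ ∈ (0, 2π], and let |ψ_GHZ⟩ = √κ (cos δ |000⟩ + sin δ e^{iφ} |ψ_A⟩|ψ_B⟩|ψ_C⟩) with |ψ_A⟩ = cos α|0⟩ + sin α|1⟩, |ψ_B⟩ = cos β|0⟩ + sin β|1⟩, |ψ_C⟩ = cos γ|0⟩ + sin γ|1⟩ and κ = (1 + 2 cos δ sin δ cos α cos β cos γ cos φ)^{-1}, and set ρ_ABC = |ψ_GHZ⟩⟨ψ_GHZ|. Then the maximal CHSH violations of the two-qubit reductions obey the trade-off relation 8 ≤ ⟨CHSH⟩²_{ρ_AB} + ⟨CHSH⟩²_{ρ_BC} + ⟨CHSH⟩²_{ρ_AC} ≤ 12. -/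
open Matrix Finset

/-!
For a normalized pure three-qubit state, `tr ρ_AB² = tr ρ_C²` together with the Pauli expansion
of the purities gives `‖M(ρ_AB)‖² = 1 + 2|r_C|² - |r_A|² - |r_B|²`, where `r_X` is the Bloch vector
of the one-qubit marginal `ρ_X`. Summing over the three pairs, the Bloch terms cancel and
`‖M(ρ_AB)‖² + ‖M(ρ_BC)‖² + ‖M(ρ_AC)‖² = 3`. Since `⟨CHSH⟩²_ρ = 4 (‖M(ρ)‖² - τ₃)` with
`0 ≤ τ₃ ≤ ‖M(ρ)‖² / 3`, the sum of the squared violations lies in `[8, 12]`. The GHZ-type state is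
normalized because `1 + sin 2δ cos α cos β cos γ cos φ > 0` as soon as `|cos α| < 1`.
-/

lemma Matrix.IsHermitian.card_mul_inf'_eigenvalues_le_trace {n : Type*} [Fintype n]
    [DecidableEq n] [Nonempty n] {A : Matrix n n ℝ} (hA : A.IsHermitian) :
    Fintype.card n * univ.inf' univ_nonempty hA.eigenvalues ≤ A.trace := by
  rw [hA.trace_eq_sum_eigenvalues]
  simpa using card_nsmul_le_sum univ hA.eigenvalues (univ.inf' univ_nonempty hA.eigenvalues)
    fun i _ => inf'_le _ (mem_univ i)

noncomputable def corrNormSq (ρ : Matrix (Fin 2 × Fin 2) (Fin 2 × Fin 2) ℂ) : ℝ :=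
  ((corr ρ)ᵀ * corr ρ).trace

lemma CHSHsq_le (ρ : Matrix (Fin 2 × Fin 2) (Fin 2 × Fin 2) ℂ) :
    CHSHsq ρ ≤ 4 * corrNormSq ρ := by
  have : 0 ≤ univ.inf' univ_nonempty (corr_herm ρ).eigenvalues :=
    le_inf' _ _ fun i _ => eigenvalues_conjTranspose_mul_self_nonneg (corr ρ) i
  rw [CHSHsq, corrNormSq]
  linarith

lemma le_CHSHsq (ρ : Matrix (Fin 2 × Fin 2) (Fin 2 × Fin 2) ℂ) :
    8 / 3 * corrNormSq ρ ≤ CHSHsq ρ := by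
  have := (corr_herm ρ).card_mul_inf'_eigenvalues_le_trace
  rw [Fintype.card_fin] at this
  rw [CHSHsq, corrNormSq]
  push_cast at this
  linarith

noncomputable def blochNormSq (ρ : Matrix (Fin 2) (Fin 2) ℂ) : ℝ :=
  ∑ i, (ρ * pauli i).trace.re ^ 2

/-- The marginal ρ_A. -/
def ptrBC (ρ : Matrix (Fin 2 × Fin 2 × Fin 2) (Fin 2 × Fin 2 × Fin 2) ℂ) :
    Matrix (Fin 2) (Fin 2) ℂ :=
  fun i k => ∑ m : Fin 2, ∑ n : Fin 2, ρ (i, m, n) (k, m, n)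

/-- The marginal ρ_B. -/
def ptrAC (ρ : Matrix (Fin 2 × Fin 2 × Fin 2) (Fin 2 × Fin 2 × Fin 2) ℂ) :
    Matrix (Fin 2) (Fin 2) ℂ :=
  fun i k => ∑ m : Fin 2, ∑ n : Fin 2, ρ (m, i, n) (m, k, n)

/-- The marginal ρ_C. -/
def ptrAB (ρ : Matrix (Fin 2 × Fin 2 × Fin 2) (Fin 2 × Fin 2 × Fin 2) ℂ) :
    Matrix (Fin 2) (Fin 2) ℂ :=
  fun i k => ∑ m : Fin 2, ∑ n : Fin 2, ρ (m, n, i) (m, n, k)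

section PureState

variable (ψ : Fin 2 × Fin 2 × Fin 2 → ℂ)

lemma corrNormSq_ptrC_pureState3 :
    corrNormSq (ptrC (pureState3 ψ)) = (∑ p, Complex.normSq (ψ p)) ^ 2
      + 2 * blochNormSq (ptrAB (pureState3 ψ))
      - blochNormSq (ptrBC (pureState3 ψ)) - blochNormSq (ptrAC (pureState3 ψ)) := by
  simp only [corrNormSq, corr, ptrC, ptrAB, ptrBC, ptrAC, blochNormSq, pureState3, kron2,
    Matrix.trace, Matrix.diag, Matrix.mul_apply, Matrix.transpose_apply, Fintype.sum_prod_type,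
    Fin.sum_univ_two, Fin.sum_univ_three, Complex.normSq_apply]
  norm_num [pauli, Matrix.cons_val_zero, Matrix.cons_val_one, Matrix.head_cons,
    Matrix.cons_val_two, Matrix.tail_cons]
  ring

lemma corrNormSq_ptrA_pureState3 :
    corrNormSq (ptrA (pureState3 ψ)) = (∑ p, Complex.normSq (ψ p)) ^ 2
      + 2 * blochNormSq (ptrBC (pureState3 ψ))
      - blochNormSq (ptrAC (pureState3 ψ)) - blochNormSq (ptrAB (pureState3 ψ)) := by
  simp only [corrNormSq, corr, ptrA, ptrAB, ptrBC, ptrAC, blochNormSq, pureState3, kron2,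
    Matrix.trace, Matrix.diag, Matrix.mul_apply, Matrix.transpose_apply, Fintype.sum_prod_type,
    Fin.sum_univ_two, Fin.sum_univ_three, Complex.normSq_apply]
  norm_num [pauli, Matrix.cons_val_zero, Matrix.cons_val_one, Matrix.head_cons,
    Matrix.cons_val_two, Matrix.tail_cons]
  ring

lemma corrNormSq_ptrB_pureState3 :
    corrNormSq (ptrB (pureState3 ψ)) = (∑ p, Complex.normSq (ψ p)) ^ 2
      + 2 * blochNormSq (ptrAC (pureState3 ψ))
      - blochNormSq (ptrBC (pureState3 ψ)) - blochNormSq (ptrAB (pureState3 ψ)) := by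
  simp only [corrNormSq, corr, ptrB, ptrAB, ptrBC, ptrAC, blochNormSq, pureState3, kron2,
    Matrix.trace, Matrix.diag, Matrix.mul_apply, Matrix.transpose_apply, Fintype.sum_prod_type,
    Fin.sum_univ_two, Fin.sum_univ_three, Complex.normSq_apply]
  norm_num [pauli, Matrix.cons_val_zero, Matrix.cons_val_one, Matrix.head_cons,
    Matrix.cons_val_two, Matrix.tail_cons]
  ring

lemma chsh_tradeoff_pureState3 (hψ : ∑ p, Complex.normSq (ψ p) = 1) :
    8 ≤ CHSHsq (ptrC (pureState3 ψ)) + CHSHsq (ptrA (pureState3 ψ))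
        + CHSHsq (ptrB (pureState3 ψ)) ∧
      CHSHsq (ptrC (pureState3 ψ)) + CHSHsq (ptrA (pureState3 ψ))
        + CHSHsq (ptrB (pureState3 ψ)) ≤ 12 := by
  have hsum : corrNormSq (ptrC (pureState3 ψ)) + corrNormSq (ptrA (pureState3 ψ))
      + corrNormSq (ptrB (pureState3 ψ)) = 3 := by
    rw [corrNormSq_ptrC_pureState3, corrNormSq_ptrA_pureState3, corrNormSq_ptrB_pureState3, hψ]
    ring
  constructor
  · linarith [le_CHSHsq (ptrC (pureState3 ψ)), le_CHSHsq (ptrA (pureState3 ψ)),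
      le_CHSHsq (ptrB (pureState3 ψ))]
  · linarith [CHSHsq_le (ptrC (pureState3 ψ)), CHSHsq_le (ptrA (pureState3 ψ)),
      CHSHsq_le (ptrB (pureState3 ψ))]

end PureState

section GHZ

open Real

lemma GHZ_normalizer_pos (δ β γ φ : ℝ) {α : ℝ} (hα : sin α ≠ 0) :
    0 < 1 + 2 * cos δ * sin δ * cos α * cos β * cos γ * cos φ := by
  have hcos : |cos α| < 1 := by
    rw [← sq_lt_one_iff_abs_lt_one]
    nlinarith [sin_sq_add_cos_sq α, pow_pos (abs_pos.2 hα) 2, sq_abs (sin α)]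
  have h : |2 * cos δ * sin δ * cos α * cos β * cos γ * cos φ| < 1 := by
    rw [show 2 * cos δ * sin δ = sin (2 * δ) by rw [sin_two_mul]; ring]
    simp only [abs_mul]
    calc _ ≤ 1 * |cos α| * 1 * 1 * 1 := by
            gcongr <;> first | exact abs_sin_le_one _ | exact abs_cos_le_one _
      _ < 1 := by simpa using hcos
  linarith [(abs_lt.mp h).1]

lemma sum_normSq_GHZ (δ α β γ φ : ℝ) :
    ∑ p : Fin 2 × Fin 2 × Fin 2, Complex.normSq ((cos δ : ℂ) * (ket0 p.1 * ket0 p.2.1 * ket0 p.2.2)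
      + (sin δ : ℂ) * Complex.exp (Complex.I * (φ : ℂ)) *
        (![(cos α : ℂ), (sin α : ℂ)] p.1 * ![(cos β : ℂ), (sin β : ℂ)] p.2.1 *
          ![(cos γ : ℂ), (sin γ : ℂ)] p.2.2)) =
      1 + 2 * cos δ * sin δ * cos α * cos β * cos γ * cos φ := by
  rw [mul_comm Complex.I, Complex.exp_mul_I, ← Complex.ofReal_cos, ← Complex.ofReal_sin]
  simp only [ket0, Fintype.sum_prod_type, Fin.sum_univ_two, Complex.normSq_apply,
    Matrix.cons_val_zero, Matrix.cons_val_one, Complex.add_re, Complex.add_im, Complex.mul_re,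
    Complex.mul_im, Complex.ofReal_re, Complex.ofReal_im, Complex.I_re, Complex.I_im,
    Complex.one_re, Complex.one_im, Complex.zero_re, Complex.zero_im]
  calc _ = cos δ ^ 2 + 2 * cos δ * sin δ * cos α * cos β * cos γ * cos φ
        + sin δ ^ 2 * ((cos φ ^ 2 + sin φ ^ 2) * (cos α ^ 2 + sin α ^ 2)
          * (cos β ^ 2 + sin β ^ 2) * (cos γ ^ 2 + sin γ ^ 2)) := by ring
    _ = _ := by
      simp only [cos_sq_add_sin_sq, mul_one]
      linear_combination cos_sq_add_sin_sq δ

end GHZ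

theorem chsh_tradeoff_GHZ_state_general
    (δ α β γ φ κ : ℝ)
    (hα : 0 < α ∧ α ≤ Real.pi / 2)
    (hκ : κ = (1 + 2 * Real.cos δ * Real.sin δ * Real.cos α * Real.cos β *
      Real.cos γ * Real.cos φ)⁻¹)
    (ψA ψB ψC : Fin 2 → ℂ)
    (hψA : ψA = ![(Real.cos α : ℂ), (Real.sin α : ℂ)])
    (hψB : ψB = ![(Real.cos β : ℂ), (Real.sin β : ℂ)])
    (hψC : ψC = ![(Real.cos γ : ℂ), (Real.sin γ : ℂ)])
    (ψ : Fin 2 × Fin 2 × Fin 2 → ℂ)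
    (hψ : ψ = fun p => (Real.sqrt κ : ℂ) *
      ((Real.cos δ : ℂ) * (ket0 p.1 * ket0 p.2.1 * ket0 p.2.2) +
       (Real.sin δ : ℂ) * Complex.exp (Complex.I * (φ : ℂ)) *
         (ψA p.1 * ψB p.2.1 * ψC p.2.2)))
    (ρ : Matrix (Fin 2 × Fin 2 × Fin 2) (Fin 2 × Fin 2 × Fin 2) ℂ)
    (hρ : ρ = pureState3 ψ) :
    8 ≤ CHSHsq (ptrC ρ) + CHSHsq (ptrA ρ) + CHSHsq (ptrB ρ) ∧
      CHSHsq (ptrC ρ) + CHSHsq (ptrA ρ) + CHSHsq (ptrB ρ) ≤ 12 := by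
  have hD := GHZ_normalizer_pos δ β γ φ
    (Real.sin_pos_of_pos_of_lt_pi hα.1 (by linarith [Real.pi_pos])).ne'
  subst hρ hψ hψA hψB hψC hκ
  refine chsh_tradeoff_pureState3 _ ?_
  simp only [map_mul, ← Finset.mul_sum, sum_normSq_GHZ, Complex.normSq_ofReal,
    Real.mul_self_sqrt (inv_pos.2 hD).le]
  exact inv_mul_cancel₀ hD.ne'

theorem chsh_tradeoff_GHZ_state
    (δ α β γ φ κ : ℝ)
    (hδ : 0 < δ ∧ δ ≤ Real.pi / 4)
    (hα : 0 < α ∧ α ≤ Real.pi / 2)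
    (hβ : 0 < β ∧ β ≤ Real.pi / 2)
    (hγ : 0 < γ ∧ γ ≤ Real.pi / 2)
    (hφ : 0 < φ ∧ φ ≤ 2 * Real.pi)
    (hκ : κ = (1 + 2 * Real.cos δ * Real.sin δ * Real.cos α * Real.cos β *
      Real.cos γ * Real.cos φ)⁻¹)
    (ψA ψB ψC : Fin 2 → ℂ)
    (hψA : ψA = ![(Real.cos α : ℂ), (Real.sin α : ℂ)])
    (hψB : ψB = ![(Real.cos β : ℂ), (Real.sin β : ℂ)])
    (hψC : ψC = ![(Real.cos γ : ℂ), (Real.sin γ : ℂ)])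
    (ψ : Fin 2 × Fin 2 × Fin 2 → ℂ)
    (hψ : ψ = fun p => (Real.sqrt κ : ℂ) *
      ((Real.cos δ : ℂ) * (ket0 p.1 * ket0 p.2.1 * ket0 p.2.2) +
       (Real.sin δ : ℂ) * Complex.exp (Complex.I * (φ : ℂ)) *
         (ψA p.1 * ψB p.2.1 * ψC p.2.2)))
    (ρ : Matrix (Fin 2 × Fin 2 × Fin 2) (Fin 2 × Fin 2 × Fin 2) ℂ)
    (hρ : ρ = pureState3 ψ) :
    8 ≤ CHSHsq (ptrC ρ) + CHSHsq (ptrA ρ) + CHSHsq (ptrB ρ) ∧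
      CHSHsq (ptrC ρ) + CHSHsq (ptrA ρ) + CHSHsq (ptrB ρ) ≤ 12 :=
  chsh_tradeoff_GHZ_state_general δ α β γ φ κ hα hκ ψA ψB ψC hψA hψB hψC ψ hψ ρ hρ
end

section
/- Let δ ∈ ℝ with cos δ ≥ sin δ > 0 and let ρ = cos²δ |00⟩⟨00| + cos δ sin δ |00⟩⟨11| + cos δ sin δ |11⟩⟨00| + sin²δ |11⟩⟨11| be the density matrix of the pure state cos δ|00⟩ + sin δ|11⟩. Then ⟨CHSH⟩²_ρ = 16 cos²δ sin²δ + 4. -/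
open Matrix Finset

noncomputable section

/-- Density matrix |ψ⟩⟨ψ| of a 2-qubit pure state. -/
def pureState2 (ψ : Fin 2 × Fin 2 → ℂ) :
    Matrix (Fin 2 × Fin 2) (Fin 2 × Fin 2) ℂ :=
  fun p q => ψ p * (starRingEnd ℂ) (ψ q)

end

lemma spec_diag (a μ : ℝ) (hμ : μ ∈ spectrum ℝ (Matrix.diagonal ![a, a, 1])) :
    μ = a ∨ μ = 1 := by
  rw [spectrum.mem_iff, Matrix.algebraMap_eq_diagonal, Matrix.diagonal_sub] at hμ
  have hdet : (Matrix.diagonal fun i => (algebraMap ℝ (Fin 3 → ℝ)) μ i - ![a, a, 1] i).det = 0 := by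
    by_contra h
    exact hμ ((Matrix.isUnit_iff_isUnit_det _).mpr (isUnit_iff_ne_zero.mpr h))
  rw [Matrix.det_diagonal, Fin.prod_univ_three] at hdet
  simp only [Matrix.cons_val_zero, Matrix.cons_val_one, Matrix.head_cons, Pi.algebraMap_apply,
    algebraMap.coe_one, Matrix.cons_val_two, Matrix.tail_cons, id] at hdet
  have : (μ - a) * (μ - a) * (μ - 1) = 0 := by
    convert hdet using 2 <;> simp
  rcases mul_eq_zero.mp this with h | h
  · rcases mul_eq_zero.mp h with h | h <;> exact Or.inl (by linarith)
  · exact Or.inr (by linarith)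

lemma aux_inf (e : Fin 3 → ℝ) (a : ℝ) (ha0 : 0 < a) (ha1 : a ≤ 1)
    (heig : ∀ i, e i = a ∨ e i = 1) (hdet : ∏ i, e i = a * a) :
    (univ : Finset (Fin 3)).inf' Finset.univ_nonempty e = a := by
  have hge : ∀ i ∈ (univ : Finset (Fin 3)), a ≤ e i := by
    intro i _
    rcases heig i with h | h
    · rw [h]
    · rw [h]; exact ha1
  have hex : ∃ i, e i = a := by
    by_cases h1 : a = 1
    · exact ⟨0, (heig 0).elim id (fun h => h.trans h1.symm)⟩
    · by_contra hcon
      push_neg at hcon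
      have hall : ∀ i, e i = 1 := fun i => (heig i).resolve_left (hcon i)
      rw [Fin.prod_univ_three, hall 0, hall 1, hall 2] at hdet
      have h2 : (1:ℝ) ≤ a := by nlinarith
      exact h1 (le_antisymm ha1 h2)
  refine le_antisymm ?_ (Finset.le_inf' _ _ hge)
  obtain ⟨i, hi⟩ := hex
  exact (Finset.inf'_le _ (mem_univ i)).trans_eq hi

theorem chsh_of_two_qubit_entangled_state
    (δ : ℝ) (hsin : Real.sin δ > 0) (hcos : Real.cos δ ≥ Real.sin δ)
    (ρ : Matrix (Fin 2 × Fin 2) (Fin 2 × Fin 2) ℂ)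
    (hρ : ρ = pureState2 (fun p =>
      (Real.cos δ : ℂ) * (ket0 p.1 * ket0 p.2) +
      (Real.sin δ : ℂ) * (ket1 p.1 * ket1 p.2)))
    (hρ' : ∀ p q, ρ p q =
      (Real.cos δ ^ 2 : ℝ) * (ket0 p.1 * ket0 p.2) * (starRingEnd ℂ) (ket0 q.1 * ket0 q.2) +
      (Real.cos δ * Real.sin δ : ℝ) * (ket0 p.1 * ket0 p.2) * (starRingEnd ℂ) (ket1 q.1 * ket1 q.2) +
      (Real.cos δ * Real.sin δ : ℝ) * (ket1 p.1 * ket1 p.2) * (starRingEnd ℂ) (ket0 q.1 * ket0 q.2) +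
      (Real.sin δ ^ 2 : ℝ) * (ket1 p.1 * ket1 p.2) * (starRingEnd ℂ) (ket1 q.1 * ket1 q.2)) :
    CHSHsq ρ = 16 * Real.cos δ ^ 2 * Real.sin δ ^ 2 + 4 := by
  clear hρ
  have hcpos : 0 < Real.cos δ := lt_of_lt_of_le hsin hcos
  have hM : corr ρ = Matrix.diagonal
      ![2 * Real.cos δ * Real.sin δ, -(2 * Real.cos δ * Real.sin δ), 1] := by
    funext i j
    fin_cases i <;> fin_cases j <;>
      simp [corr, Matrix.trace, Matrix.mul_apply, kron2, pauli, hρ', ket0, ket1,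
        Fintype.sum_prod_type, Fin.sum_univ_succ, Matrix.diagonal, Complex.ext_iff,
        Complex.cos_ofReal_re, Complex.sin_ofReal_re] <;> ring
  set a : ℝ := 4 * Real.cos δ ^ 2 * Real.sin δ ^ 2 with ha
  have hA : (corr ρ)ᵀ * corr ρ = Matrix.diagonal ![a, a, 1] := by
    rw [hM, Matrix.diagonal_transpose, Matrix.diagonal_mul_diagonal]
    ext i j
    fin_cases i <;> fin_cases j <;> simp [Matrix.diagonal, ha] <;> ring
  have ha0 : 0 < a := by rw [ha]; positivity
  have ha1 : a ≤ 1 := by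
    have h2 : a = Real.sin (2 * δ) ^ 2 := by rw [Real.sin_two_mul, ha]; ring
    rw [h2]; exact Real.sin_sq_le_one _
  have heig : ∀ i, (corr_herm ρ).eigenvalues i = a ∨ (corr_herm ρ).eigenvalues i = 1 := by
    intro i
    refine spec_diag a _ ?_
    rw [← hA]
    exact (corr_herm ρ).eigenvalues_mem_spectrum_real i
  have hdet : ∏ i, (corr_herm ρ).eigenvalues i = a * a := by
    have h1 : ((corr ρ)ᵀ * corr ρ).det = ∏ i, (corr_herm ρ).eigenvalues i := by
      simpa using (corr_herm ρ).det_eq_prod_eigenvalues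
    rw [← h1, hA, Matrix.det_diagonal, Fin.prod_univ_three]
    simp
  have hinf := aux_inf (corr_herm ρ).eigenvalues a ha0 ha1 heig hdet
  have htr : ((corr ρ)ᵀ * corr ρ).trace = a + a + 1 := by
    rw [hA, Matrix.trace_diagonal, Fin.sum_univ_three]
    simp
  rw [CHSHsq, htr, hinf, ha]
  ring
end
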